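/- arXiv:1704.00336 — 2 statements merged into one kernel-verified Lean document; each statement's English description precedes it below -/
import Mathlib

section
/- For a nonnegative random variable X and an independent nonnegative random variable I and constant σ² > 0, E[ln(1 + X/(I+σ²))] = ∫_0^∞ (1/t)·E[(1 − e^{−tX}) e^{−tI}]·e^{−σ²t} dt. -/
/-!
For `x ≥ 0` and `a > 0`, `t⁻¹ (1 - e^{-tx}) e^{-ta} = ∫_0^x e^{-(s+a)t} ds`, so exchanging the
order of integration gives the Frullani-type integral
`∫_0^∞ t⁻¹ (1 - e^{-tx}) e^{-ta} dt = ∫_0^x (s+a)⁻¹ ds = log (1 + x/a)`.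
Taking `x = X ω`, `a = I ω + σ²` and exchanging the expectation with the `t`-integral (Tonelli,
the integrand being nonnegative) gives the identity.
-/

open Real MeasureTheory Set Function

section TonelliSwap

variable {α β : Type*} [MeasurableSpace α] [MeasurableSpace β] {μ : Measure α} {ν : Measure β}

theorem integral_integral_eq_toReal_lintegral_lintegral [SFinite ν] {f : α → β → ℝ}
    (hf : AEStronglyMeasurable (uncurry f) (μ.prod ν)) (hf0 : ∀ a b, 0 ≤ f a b)
    (hfi : ∀ᵐ a ∂μ, Integrable (f a) ν) :
    ∫ a, ∫ b, f a b ∂ν ∂μ = (∫⁻ a, ∫⁻ b, ENNReal.ofReal (f a b) ∂ν ∂μ).toReal := by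
  rw [integral_eq_lintegral_of_nonneg_ae (ae_of_all _ fun a => integral_nonneg (hf0 a))
    hf.integral_prod_right']
  congr 1
  refine lintegral_congr_ae ?_
  filter_upwards [hfi] with a ha
  exact ofReal_integral_eq_lintegral_ofReal ha (ae_of_all _ (hf0 a))

theorem integral_integral_swap_of_nonneg [SFinite μ] [SFinite ν] {f : α → β → ℝ}
    (hf : AEStronglyMeasurable (uncurry f) (μ.prod ν)) (hf0 : ∀ a b, 0 ≤ f a b)
    (hμ : ∀ᵐ a ∂μ, Integrable (f a) ν) (hν : ∀ᵐ b ∂ν, Integrable (fun a => f a b) μ) :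
    ∫ a, ∫ b, f a b ∂ν ∂μ = ∫ b, ∫ a, f a b ∂μ ∂ν := by
  rw [integral_integral_eq_toReal_lintegral_lintegral hf hf0 hμ,
    integral_integral_eq_toReal_lintegral_lintegral hf.prod_swap (fun b a => hf0 a b) hν,
    lintegral_lintegral_swap hf.aemeasurable.ennreal_ofReal]

end TonelliSwap

theorem integral_exp_neg_mul_Ioi {c : ℝ} (hc : 0 < c) : ∫ t in Ioi 0, exp (-(c * t)) = c⁻¹ := by
  simpa [neg_mul] using integral_exp_mul_Ioi (neg_neg_of_pos hc) 0

theorem integrableOn_exp_neg_mul_Ioi {c : ℝ} (hc : 0 < c) :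
    IntegrableOn (fun t => exp (-(c * t))) (Ioi 0) := by
  simpa [neg_mul] using exp_neg_integrableOn_Ioi 0 hc

theorem integral_inv_add {a x : ℝ} (ha : 0 < a) (hx : 0 ≤ x) :
    ∫ s in 0..x, (s + a)⁻¹ = log (1 + x / a) := by
  rw [intervalIntegral.integral_comp_add_right (fun s => s⁻¹), zero_add,
    integral_inv (by simp [uIcc_of_le (by linarith : a ≤ x + a), ha.not_ge]), add_div,
    div_self ha.ne', add_comm]

theorem integral_exp_neg_add_mul {a t : ℝ} (ht : t ≠ 0) (x : ℝ) :
    ∫ s in 0..x, exp (-((s + a) * t)) = t⁻¹ * (1 - exp (-(t * x))) * exp (-(t * a)) := by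
  have hderiv (s : ℝ) :
      HasDerivAt (fun s => -t⁻¹ * exp (-((s + a) * t))) (exp (-((s + a) * t))) s := by
    refine (((hasDerivAt_id' s).add_const a).mul_const t).fun_neg.exp.const_mul (-t⁻¹)
      |>.congr_deriv ?_
    field_simp
  rw [intervalIntegral.integral_eq_sub_of_hasDerivAt (fun s _ => hderiv s)
    ((by fun_prop : Continuous _).intervalIntegrable _ _)]
  have hsplit : exp (-((x + a) * t)) = exp (-(t * x)) * exp (-(t * a)) := by
    rw [← exp_add]; ring_nf
  rw [hsplit, zero_add, mul_comm a t]
  ring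

section FrullaniKernel

variable {x a t : ℝ}

theorem inv_mul_one_sub_exp_neg_mul_nonneg (hx : 0 ≤ x) (t : ℝ) :
    0 ≤ t⁻¹ * (1 - exp (-(t * x))) := by
  rcases le_total 0 t with ht | ht
  · exact mul_nonneg (inv_nonneg.2 ht) (sub_nonneg.2 (exp_le_one_iff.2 (by nlinarith)))
  · exact mul_nonneg_of_nonpos_of_nonpos (inv_nonpos.2 ht)
      (sub_nonpos.2 (one_le_exp_iff.2 (by nlinarith)))

theorem inv_mul_one_sub_exp_neg_mul_le (ht : 0 < t) : t⁻¹ * (1 - exp (-(t * x))) ≤ x := by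
  rw [inv_mul_le_iff₀ ht]
  linarith [add_one_le_exp (-(t * x))]

theorem inv_mul_one_sub_exp_neg_mul_mul_exp_neg_mul_le_inv (ht : 0 < t) (ha : 0 ≤ a) :
    t⁻¹ * (1 - exp (-(t * x))) * exp (-(t * a)) ≤ t⁻¹ :=
  calc t⁻¹ * (1 - exp (-(t * x))) * exp (-(t * a))
      ≤ t⁻¹ * 1 * 1 := by
        gcongr
        · exact sub_le_self _ (exp_pos _).le
        · exact exp_le_one_iff.2 (neg_nonpos.2 (mul_nonneg ht.le ha))
    _ = t⁻¹ := by ring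

theorem integrableOn_frullani_exp (hx : 0 ≤ x) (ha : 0 < a) :
    IntegrableOn (fun t => t⁻¹ * (1 - exp (-(t * x))) * exp (-(t * a))) (Ioi 0) := by
  refine Integrable.mono' ((integrableOn_exp_neg_mul_Ioi ha).const_mul x)
    (Measurable.aestronglyMeasurable (by fun_prop)) ?_
  refine (ae_restrict_iff' measurableSet_Ioi).2 (ae_of_all _ fun t ht => ?_)
  rw [Real.norm_of_nonneg (mul_nonneg (inv_mul_one_sub_exp_neg_mul_nonneg hx t) (exp_pos _).le),
    mul_comm a t]
  exact mul_le_mul_of_nonneg_right (inv_mul_one_sub_exp_neg_mul_le ht) (exp_pos _).le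

theorem integral_frullani_exp (hx : 0 ≤ x) (ha : 0 < a) :
    ∫ t in Ioi 0, t⁻¹ * (1 - exp (-(t * x))) * exp (-(t * a)) = log (1 + x / a) :=
  calc ∫ t in Ioi 0, t⁻¹ * (1 - exp (-(t * x))) * exp (-(t * a))
      = ∫ t in Ioi 0, ∫ s in Ioc 0 x, exp (-((s + a) * t)) :=
        setIntegral_congr_fun measurableSet_Ioi fun t ht => by
          rw [← intervalIntegral.integral_of_le hx, integral_exp_neg_add_mul (ne_of_gt ht)]
    _ = ∫ s in Ioc 0 x, ∫ t in Ioi 0, exp (-((s + a) * t)) := by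
        refine integral_integral_swap_of_nonneg ?_ (fun _ _ => (exp_pos _).le)
          (ae_of_all _ fun t => (by fun_prop : Continuous _).integrableOn_Ioc)
          ((ae_restrict_iff' measurableSet_Ioc).2 (ae_of_all _ fun s hs =>
            integrableOn_exp_neg_mul_Ioi (by linarith [hs.1])))
        exact (by fun_prop : Continuous fun p : ℝ × ℝ => exp (-((p.2 + a) * p.1)))
          |>.aestronglyMeasurable
    _ = ∫ s in Ioc 0 x, (s + a)⁻¹ :=
        setIntegral_congr_fun measurableSet_Ioc fun s hs =>
          integral_exp_neg_mul_Ioi (by linarith [hs.1])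
    _ = log (1 + x / a) := by rw [← intervalIntegral.integral_of_le hx, integral_inv_add ha hx]

end FrullaniKernel

theorem stmt_9_general {Ω : Type*} [MeasureSpace Ω] (μ : Measure Ω) [IsProbabilityMeasure μ]
    (X I : Ω → ℝ) (hX : Measurable X) (hI : Measurable I)
    (hXnn : ∀ ω, 0 ≤ X ω) (hInn : ∀ ω, 0 ≤ I ω) (σ2 : ℝ) (hσ : 0 < σ2) :
    (∫ ω, Real.log (1 + X ω / (I ω + σ2)) ∂μ)
      =
    ∫ t in Set.Ioi (0 : ℝ),
      (1 / t) * (∫ ω, (1 - Real.exp (-(t * X ω))) * Real.exp (-(t * I ω)) ∂μ) *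
        Real.exp (-(σ2 * t)) := by
  have hIσ : ∀ ω, 0 < I ω + σ2 := fun ω => by linarith [hInn ω]
  have hkernel_nonneg : ∀ ω t, 0 ≤ t⁻¹ * (1 - exp (-(t * X ω))) * exp (-(t * (I ω + σ2))) :=
    fun ω t => mul_nonneg (inv_mul_one_sub_exp_neg_mul_nonneg (hXnn ω) t) (exp_pos _).le
  have hkernel_integrable : ∀ t ∈ Ioi (0 : ℝ),
      Integrable (fun ω => t⁻¹ * (1 - exp (-(t * X ω))) * exp (-(t * (I ω + σ2)))) μ :=
    fun t ht => Integrable.of_bound (Measurable.aestronglyMeasurable (by fun_prop)) t⁻¹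
      (ae_of_all _ fun ω => by
        rw [Real.norm_of_nonneg (hkernel_nonneg ω t)]
        exact inv_mul_one_sub_exp_neg_mul_mul_exp_neg_mul_le_inv ht (hIσ ω).le)
  calc ∫ ω, log (1 + X ω / (I ω + σ2)) ∂μ
      = ∫ ω, (∫ t in Ioi 0, t⁻¹ * (1 - exp (-(t * X ω))) * exp (-(t * (I ω + σ2)))) ∂μ :=
        integral_congr_ae (ae_of_all _ fun ω => (integral_frullani_exp (hXnn ω) (hIσ ω)).symm)
    _ = ∫ t in Ioi 0, ∫ ω, t⁻¹ * (1 - exp (-(t * X ω))) * exp (-(t * (I ω + σ2))) ∂μ :=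
        integral_integral_swap_of_nonneg (Measurable.aestronglyMeasurable (by fun_prop))
          hkernel_nonneg (ae_of_all _ fun ω => integrableOn_frullani_exp (hXnn ω) (hIσ ω))
          ((ae_restrict_iff' measurableSet_Ioi).2 (ae_of_all _ hkernel_integrable))
    _ = _ := by
        refine setIntegral_congr_fun measurableSet_Ioi fun t _ => ?_
        rw [← integral_const_mul, ← integral_mul_const]
        congr 1 with ω
        rw [mul_add, neg_add, exp_add, mul_comm σ2 t]
        ring

/-- Hamdi's lemma: for nonnegative random variables `X`, `I` and `σ² > 0`,
`E[ln(1 + X/(I+σ²))] = ∫_0^∞ (1/t)·E[(1 − e^{−tX}) e^{−tI}]·e^{−σ²t} dt`. -/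
theorem stmt_9 {Ω : Type*} [MeasureSpace Ω] (μ : Measure Ω) [IsProbabilityMeasure μ]
    (X I : Ω → ℝ) (hX : Measurable X) (hI : Measurable I)
    (hXnn : ∀ ω, 0 ≤ X ω) (hInn : ∀ ω, 0 ≤ I ω) (σ2 : ℝ) (hσ : 0 < σ2)
    (hint : Integrable (fun ω => Real.log (1 + X ω / (I ω + σ2))) μ) :
    (∫ ω, Real.log (1 + X ω / (I ω + σ2)) ∂μ)
      =
    ∫ t in Set.Ioi (0 : ℝ),
      (1 / t) * (∫ ω, (1 - Real.exp (-(t * X ω))) * Real.exp (-(t * I ω)) ∂μ) *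
        Real.exp (-(σ2 * t)) :=
  stmt_9_general μ X I hX hI hXnn hInn σ2 hσ
end

section
/- Let r₀ > 0, α > 2. With the modified nearest-neighbor PDF f̃(r) = (2πr/e^{−πr₀²})·e^{−πr²} on [r₀, ∞), we have ∫_{r₀}^∞ ln(r) f̃(r) dr = −(e^{πr₀²}/2)·(Ei(−πr₀²) − 2 e^{−πr₀²} ln r₀), where Ei is the exponential integral. Consequently E[ln L(r)] = ln β + (α/2) e^{πr₀²}(Ei(−πr₀²) − 2e^{−πr₀²} ln r₀) for L(r) = β r^{−α}. -/
/-!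
Write `f̃ = e^{πr₀²} p` with `p r = 2πr e^{-πr²}` the unconditioned nearest-neighbour density and
`E₁ x = ∫_x^∞ e^{-t}/t dt = -Ei(-x)`. Everything then reduces to `∫_{r₀}^∞ p = e^{-πr₀²}` and
`∫_{r₀}^∞ log r · p r dr = E₁(πr₀²)/2 + e^{-πr₀²} log r₀`. The latter is the fundamental theorem
of calculus for the primitive `-log u · e^{-πu²} - E₁(πu²)/2`, found by integrating by parts; its
value at infinity is `0` because the Gaussian factor beats the logarithm and `E₁ → 0`.
-/

open Real MeasureTheory

/-- Exponential integral `Ei(x) = −∫_{−x}^∞ e^{−t}/t dt`. -/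
noncomputable def expInt (x : ℝ) : ℝ :=
  -∫ t in Set.Ioi (-x), Real.exp (-t) / t

open Set Filter Topology

noncomputable section

def expIntE1 (x : ℝ) : ℝ := ∫ t in Ioi x, exp (-t) / t

theorem expInt_neg (x : ℝ) : expInt (-x) = -expIntE1 x := by
  rw [expInt, neg_neg, expIntE1]

theorem continuousOn_exp_neg_div : ContinuousOn (fun t => exp (-t) / t) (Ioi 0) :=
  (by fun_prop : Continuous fun t => exp (-t)).continuousOn.div continuousOn_id
    fun _ ht => ht.out.ne'

theorem integrableOn_exp_neg_div_Ioi {c : ℝ} (hc : 0 < c) :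
    IntegrableOn (fun t => exp (-t) / t) (Ioi c) := by
  have hdom : IntegrableOn (fun t => exp (-t) / c) (Ioi c) := by
    have h := (exp_neg_integrableOn_Ioi c zero_lt_one).div_const c
    simp only [neg_mul, one_mul] at h
    exact h
  refine hdom.mono' ?_ ?_
  · exact (continuousOn_exp_neg_div.mono (Ioi_subset_Ioi hc.le)).aestronglyMeasurable
      measurableSet_Ioi
  · filter_upwards [ae_restrict_mem measurableSet_Ioi] with t ht
    rw [norm_div, norm_of_nonneg (exp_pos _).le, norm_of_nonneg (hc.trans ht).le]
    gcongr
    exact ht.le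

theorem expIntE1_sub_expIntE1 {c x : ℝ} (hc : 0 < c) (hcx : c ≤ x) :
    expIntE1 c - expIntE1 x = ∫ t in c..x, exp (-t) / t :=
  intervalIntegral.integral_Ioi_sub_Ioi (integrableOn_exp_neg_div_Ioi hc) hcx

theorem hasDerivAt_expIntE1 {x : ℝ} (hx : 0 < x) :
    HasDerivAt expIntE1 (-(exp (-x) / x)) x := by
  have hc : 0 < x / 2 := half_pos hx
  have hint : HasDerivAt (fun u => ∫ t in x / 2..u, exp (-t) / t) (exp (-x) / x) x := by
    refine intervalIntegral.integral_hasDerivAt_right ?_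
      (continuousOn_exp_neg_div.stronglyMeasurableAtFilter isOpen_Ioi x hx)
      (continuousOn_exp_neg_div.continuousAt (Ioi_mem_nhds hx))
    rw [intervalIntegrable_iff_integrableOn_Ioc_of_le (half_le_self hx.le)]
    exact (integrableOn_exp_neg_div_Ioi hc).mono_set Ioc_subset_Ioi_self
  refine (hint.const_sub (expIntE1 (x / 2))).congr_of_eventuallyEq ?_
  filter_upwards [eventually_ge_nhds (half_lt_self hx)] with u hu
  rw [← expIntE1_sub_expIntE1 hc hu, sub_sub_cancel]

theorem tendsto_expIntE1_atTop : Tendsto expIntE1 atTop (𝓝 0) := by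
  have h := (intervalIntegral_tendsto_integral_Ioi 1 (integrableOn_exp_neg_div_Ioi one_pos)
    tendsto_id).const_sub (expIntE1 1)
  rw [← expIntE1, sub_self] at h
  refine h.congr' ?_
  filter_upwards [eventually_ge_atTop 1] with x hx
  rw [id, ← expIntE1_sub_expIntE1 one_pos hx, sub_sub_cancel]

def nearestNeighborPDF (r : ℝ) : ℝ := 2 * π * r * exp (-(π * r ^ 2))

theorem nearestNeighborPDF_nonneg {r : ℝ} (hr : 0 ≤ r) : 0 ≤ nearestNeighborPDF r := by
  unfold nearestNeighborPDF
  positivity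

theorem tendsto_pi_mul_sq_atTop : Tendsto (fun u : ℝ => π * u ^ 2) atTop atTop :=
  (tendsto_pow_atTop two_ne_zero).const_mul_atTop pi_pos

theorem hasDerivAt_exp_neg_pi_mul_sq (r : ℝ) :
    HasDerivAt (fun u => exp (-(π * u ^ 2))) (-nearestNeighborPDF r) r := by
  refine ((hasDerivAt_pow 2 r).const_mul π).neg.exp.congr_deriv ?_
  simp only [nearestNeighborPDF, Pi.neg_apply]
  push_cast
  ring

theorem integrable_nearestNeighborPDF : Integrable nearestNeighborPDF := by
  have h := (integrable_mul_exp_neg_mul_sq pi_pos).const_mul (2 * π)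
  refine h.congr (ae_of_all _ fun r => ?_)
  simp only [nearestNeighborPDF, neg_mul]
  ring

theorem integral_Ioi_nearestNeighborPDF (a : ℝ) :
    ∫ r in Ioi a, nearestNeighborPDF r = exp (-(π * a ^ 2)) := by
  rw [integral_Ioi_of_hasDerivAt_of_tendsto' (f := fun u => -exp (-(π * u ^ 2)))
    (fun r _ => (hasDerivAt_exp_neg_pi_mul_sq r).neg.congr_deriv (neg_neg _))
    integrable_nearestNeighborPDF.integrableOn (m := 0)]
  · exact (zero_sub _).trans (neg_neg _)
  · simpa using (tendsto_exp_atBot.comp (tendsto_neg_atTop_atBot.comp tendsto_pi_mul_sq_atTop)).neg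

theorem abs_log_le_abs_log_add {a r : ℝ} (ha : 0 < a) (har : a ≤ r) :
    |log r| ≤ |log a| + r := by
  have hlow : log a ≤ log r := log_le_log ha har
  have hup : log r ≤ r - 1 := log_le_sub_one_of_pos (ha.trans_le har)
  rw [abs_le]
  constructor <;> linarith [neg_abs_le (log a), abs_nonneg (log a)]

theorem integrableOn_log_mul_nearestNeighborPDF {a : ℝ} (ha : 0 < a) :
    IntegrableOn (fun r => log r * nearestNeighborPDF r) (Ioi a) := by
  have hsq : Integrable fun r : ℝ => r ^ (2 : ℝ) * exp (-π * r ^ 2) :=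
    integrable_rpow_mul_exp_neg_mul_sq pi_pos (by norm_num)
  have hdom : Integrable fun r =>
      |log a| * nearestNeighborPDF r + 2 * π * (r ^ (2 : ℝ) * exp (-π * r ^ 2)) :=
    (integrable_nearestNeighborPDF.const_mul _).add (hsq.const_mul _)
  refine hdom.integrableOn.mono' ?_ ?_
  · exact (continuousOn_log.mono fun r hr => (ha.trans hr.out).ne').mul
      (by unfold nearestNeighborPDF; fun_prop) |>.aestronglyMeasurable measurableSet_Ioi
  · filter_upwards [ae_restrict_mem measurableSet_Ioi] with r hr
    have hpdf := nearestNeighborPDF_nonneg (ha.trans hr).le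
    calc ‖log r * nearestNeighborPDF r‖ = |log r| * nearestNeighborPDF r := by
          rw [norm_mul, norm_of_nonneg hpdf, norm_eq_abs]
      _ ≤ (|log a| + r) * nearestNeighborPDF r := by
          gcongr; exact abs_log_le_abs_log_add ha hr.out.le
      _ = _ := by rw [rpow_two, nearestNeighborPDF, neg_mul]; ring

theorem tendsto_log_mul_exp_neg_pi_mul_sq_atTop :
    Tendsto (fun r => log r * exp (-(π * r ^ 2))) atTop (𝓝 0) := by
  refine squeeze_zero_norm' ?_ (tendsto_pow_mul_exp_neg_atTop_nhds_zero 1)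
  filter_upwards [eventually_ge_atTop 1] with r hr
  have hexp : exp (-(π * r ^ 2)) ≤ exp (-r) := by
    gcongr
    nlinarith [pi_gt_three]
  rw [norm_mul, norm_of_nonneg (log_nonneg hr), norm_of_nonneg (exp_pos _).le, pow_one]
  exact mul_le_mul ((log_le_sub_one_of_pos (by linarith)).trans (by linarith)) hexp
    (exp_pos _).le (by linarith)

theorem hasDerivAt_log_mul_nearestNeighborPDF_primitive {r : ℝ} (hr : 0 < r) :
    HasDerivAt (fun u => -(log u * exp (-(π * u ^ 2))) - expIntE1 (π * u ^ 2) / 2)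
      (log r * nearestNeighborPDF r) r := by
  have hsq : HasDerivAt (fun u => π * u ^ 2) (2 * π * r) r := by
    refine ((hasDerivAt_pow 2 r).const_mul π).congr_deriv ?_
    push_cast
    ring
  have hE1 := (hasDerivAt_expIntE1 (by positivity : 0 < π * r ^ 2)).comp r hsq
  have h := ((hasDerivAt_log hr.ne').mul (hasDerivAt_exp_neg_pi_mul_sq r)).neg.sub
    (hE1.div_const 2)
  refine h.congr_deriv ?_
  simp only [nearestNeighborPDF]
  field_simp
  ring

theorem integral_Ioi_log_mul_nearestNeighborPDF {a : ℝ} (ha : 0 < a) :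
    ∫ r in Ioi a, log r * nearestNeighborPDF r =
      expIntE1 (π * a ^ 2) / 2 + exp (-(π * a ^ 2)) * log a := by
  have hlim : Tendsto (fun u => -(log u * exp (-(π * u ^ 2))) - expIntE1 (π * u ^ 2) / 2)
      atTop (𝓝 0) := by
    simpa using tendsto_log_mul_exp_neg_pi_mul_sq_atTop.neg.sub
      ((tendsto_expIntE1_atTop.comp tendsto_pi_mul_sq_atTop).div_const 2)
  rw [integral_Ioi_of_hasDerivAt_of_tendsto'
    (fun r hr => hasDerivAt_log_mul_nearestNeighborPDF_primitive (ha.trans_le hr))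
    (integrableOn_log_mul_nearestNeighborPDF ha) hlim]
  ring

end

theorem stmt_12_general (r₀ α β : ℝ) (hr₀ : 0 < r₀) :
    (∫ r in Set.Ioi r₀,
        Real.log r * (2 * π * r / Real.exp (-(π * r₀ ^ 2)) * Real.exp (-(π * r ^ 2))))
      = -(Real.exp (π * r₀ ^ 2) / 2) *
          (expInt (-(π * r₀ ^ 2)) - 2 * Real.exp (-(π * r₀ ^ 2)) * Real.log r₀) ∧
    (∫ r in Set.Ioi r₀,
        (Real.log β - α * Real.log r) *
          (2 * π * r / Real.exp (-(π * r₀ ^ 2)) * Real.exp (-(π * r ^ 2))))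
      = Real.log β + (α / 2) * Real.exp (π * r₀ ^ 2) *
          (expInt (-(π * r₀ ^ 2)) - 2 * Real.exp (-(π * r₀ ^ 2)) * Real.log r₀) := by
  set c := exp (π * r₀ ^ 2)
  have hmass : c * exp (-(π * r₀ ^ 2)) = 1 := by rw [← exp_add, add_neg_cancel, exp_zero]
  have hdensity : ∀ r, 2 * π * r / exp (-(π * r₀ ^ 2)) * exp (-(π * r ^ 2)) =
      c * nearestNeighborPDF r := fun r => by
    rw [exp_neg, div_inv_eq_mul, nearestNeighborPDF]; ring
  have hlog := integrableOn_log_mul_nearestNeighborPDF hr₀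
  have hsplit : ∀ r, (log β - α * log r) * (c * nearestNeighborPDF r) =
      (c * log β) * nearestNeighborPDF r - (c * α) * (log r * nearestNeighborPDF r) :=
    fun r => by ring
  simp_rw [hdensity, mul_left_comm (log _) c, hsplit, expInt_neg]
  rw [integral_sub (integrable_nearestNeighborPDF.integrableOn.const_mul _) (hlog.const_mul _),
    integral_const_mul, integral_const_mul, integral_const_mul,
    integral_Ioi_log_mul_nearestNeighborPDF hr₀, integral_Ioi_nearestNeighborPDF]
  constructor
  · ring
  · linear_combination log β * hmass

/-- Mean log-distance under the conditioned nearest-neighbor PDF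
`f̃(r) = 2πr e^{πr₀²} e^{−πr²}` on `[r₀,∞)`, and the resulting mean log-pathloss
`E[ln L(r)]` for `L(r) = β r^{−α}`. -/
theorem stmt_12 (r₀ α β : ℝ) (hr₀ : 0 < r₀) (hα : 2 < α) (hβ : 0 < β) :
    (∫ r in Set.Ioi r₀,
        Real.log r * (2 * π * r / Real.exp (-(π * r₀ ^ 2)) * Real.exp (-(π * r ^ 2))))
      = -(Real.exp (π * r₀ ^ 2) / 2) *
          (expInt (-(π * r₀ ^ 2)) - 2 * Real.exp (-(π * r₀ ^ 2)) * Real.log r₀) ∧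
    (∫ r in Set.Ioi r₀,
        (Real.log β - α * Real.log r) *
          (2 * π * r / Real.exp (-(π * r₀ ^ 2)) * Real.exp (-(π * r ^ 2))))
      = Real.log β + (α / 2) * Real.exp (π * r₀ ^ 2) *
          (expInt (-(π * r₀ ^ 2)) - 2 * Real.exp (-(π * r₀ ^ 2)) * Real.log r₀) :=
  stmt_12_general r₀ α β hr₀
end
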